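/- arXiv:2402.03159 — 2 statements merged into one kernel-verified Lean document; each statement's English description precedes it below -/
import Mathlib

section
/- For any linear operator A on a finite-dimensional Hilbert space and density matrix ρ, the skew information of A splits as I^s_ρ(A) = I^s_ρ(A₁) + I^s_ρ(A₂), where A₁ = (A + A†)/2 and A₂ = −i(A − A†)/2 are the Hermitian and anti-Hermitian parts of A. -/
open Matrix
open scoped ComplexOrder

/-- Real power of a Hermitian matrix via its spectral decomposition
(junk value `0` for non-Hermitian input). -/
noncomputable def mpow {d : ℕ} (ρ : Matrix (Fin d) (Fin d) ℂ) (s : ℝ) :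
    Matrix (Fin d) (Fin d) ℂ :=
  if h : ρ.IsHermitian then
    (h.eigenvectorUnitary : Matrix (Fin d) (Fin d) ℂ) *
      Matrix.diagonal (fun i => ((h.eigenvalues i ^ s : ℝ) : ℂ)) *
      (star h.eigenvectorUnitary : Matrix (Fin d) (Fin d) ℂ)
  else 0

/-- Skew information of an arbitrary (not necessarily Hermitian) operator:
`I^s_ρ(A) = (1/2)[Tr({A,A†}ρ) − Tr(ρ^{1−s}A†ρ^s A) − Tr(ρ^{1−s}Aρ^s A†)]`. -/
noncomputable def skewInfoGen {d : ℕ} (ρ A : Matrix (Fin d) (Fin d) ℂ) (s : ℝ) : ℂ :=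
  (1 / 2 : ℂ) * (((A * Aᴴ + Aᴴ * A) * ρ).trace
    - (mpow ρ (1 - s) * Aᴴ * mpow ρ s * A).trace
    - (mpow ρ (1 - s) * A * mpow ρ s * Aᴴ).trace)

theorem stmt3 {d : ℕ} (ρ A : Matrix (Fin d) (Fin d) ℂ)
    (hρ : ρ.PosSemidef) (htr : ρ.trace = 1)
    (s : ℝ) (hs0 : 0 < s) (hs1 : s < 1) :
    skewInfoGen ρ A s =
      skewInfoGen ρ ((1 / 2 : ℂ) • (A + Aᴴ)) s +
        skewInfoGen ρ ((-Complex.I / 2) • (A - Aᴴ)) s := by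
  simp only [skewInfoGen, conjTranspose_smul, conjTranspose_add, conjTranspose_sub,
    conjTranspose_conjTranspose, smul_mul_assoc, mul_smul_comm, Matrix.add_mul,
    Matrix.mul_add, Matrix.sub_mul, Matrix.mul_sub, trace_add, trace_sub, trace_smul,
    smul_smul, smul_eq_mul, star_div₀, star_one, star_neg, Complex.star_def,
    Complex.conj_I, map_ofNat]
  ring_nf
  simp only [Complex.I_sq]
  ring
end

section
/- For the qubit spin operators S_x = σ_x/2, S_y = σ_y/2, S_z = σ_z/2 and any 2×2 density matrix ρ, the sum of the Wigner-Yanase skew informations satisfies I_ρ(S_x) + I_ρ(S_y) + I_ρ(S_z) ≥ 1 − (1/2)(Tr√ρ)². -/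
/-!
For every `2 × 2` matrix `A` one has `σx A σx + σy A σy + σz A σz = 2 Tr(A) I − A`. Taking
`A = √ρ` and multiplying by `√ρ` gives `∑ₖ Tr(√ρ σₖ √ρ σₖ) = 2 (Tr √ρ)² − Tr ρ`, while `σₖ² = I`
gives `∑ₖ Tr(σₖ² ρ) = 3 Tr ρ`. Hence for `Tr ρ = 1` the sum of the three skew informations of
`Sₖ = σₖ / 2` equals `1 − (Tr √ρ)² / 2` exactly.
-/

open Matrix
open scoped ComplexOrder

/-- The positive semidefinite square root of a positive semidefinite matrix, as defined in the
older Mathlib (`Matrix.PosSemidef.sqrt`, since removed). -/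
noncomputable def Matrix.PosSemidef.sqrt {n 𝕜 : Type*} [Fintype n] [RCLike 𝕜] [DecidableEq n]
    {A : Matrix n n 𝕜} (hA : A.PosSemidef) : Matrix n n 𝕜 :=
  (hA.1.eigenvectorUnitary : Matrix n n 𝕜) *
    diagonal (fun i => ((Real.sqrt (hA.1.eigenvalues i) : ℝ) : 𝕜)) *
    (star hA.1.eigenvectorUnitary : Matrix n n 𝕜)

noncomputable def pauliX : Matrix (Fin 2) (Fin 2) ℂ := !![0, 1; 1, 0]
noncomputable def pauliY : Matrix (Fin 2) (Fin 2) ℂ := !![0, -Complex.I; Complex.I, 0]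
noncomputable def pauliZ : Matrix (Fin 2) (Fin 2) ℂ := !![1, 0; 0, -1]

/-- Wigner-Yanase skew information `I_ρ(X) = Tr(X²ρ) − Tr(√ρ X √ρ X)`. -/
noncomputable def wySkew {ρ : Matrix (Fin 2) (Fin 2) ℂ} (hρ : ρ.PosSemidef)
    (X : Matrix (Fin 2) (Fin 2) ℂ) : ℂ :=
  (X ^ 2 * ρ).trace - (hρ.sqrt * X * hρ.sqrt * X).trace

theorem Matrix.PosSemidef.sqrt_mul_self {n 𝕜 : Type*} [Fintype n] [RCLike 𝕜] [DecidableEq n]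
    {A : Matrix n n 𝕜} (hA : A.PosSemidef) : hA.sqrt * hA.sqrt = A := by
  have hU := Unitary.coe_star_mul_self hA.1.eigenvectorUnitary
  conv_rhs => rw [hA.1.spectral_theorem, Unitary.conjStarAlgAut_apply]
  rw [Matrix.PosSemidef.sqrt, show ∀ U D V : Matrix n n 𝕜,
      U * D * V * (U * D * V) = U * (D * (V * U) * D) * V by simp [Matrix.mul_assoc],
    hU, Matrix.mul_one, diagonal_mul_diagonal]
  congr 3
  funext i
  rw [Function.comp_apply, ← RCLike.ofReal_mul, Real.mul_self_sqrt (hA.eigenvalues_nonneg i)]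

theorem pauliX_mul_self : pauliX * pauliX = 1 := by
  ext i j; fin_cases i <;> fin_cases j <;> simp [pauliX]

theorem pauliY_mul_self : pauliY * pauliY = 1 := by
  ext i j; fin_cases i <;> fin_cases j <;> simp [pauliY]

theorem pauliZ_mul_self : pauliZ * pauliZ = 1 := by
  ext i j; fin_cases i <;> fin_cases j <;> simp [pauliZ]

theorem pauli_conj_sum (A : Matrix (Fin 2) (Fin 2) ℂ) :
    pauliX * A * pauliX + pauliY * A * pauliY + pauliZ * A * pauliZ = (2 * A.trace) • 1 - A := by
  ext i j
  fin_cases i <;> fin_cases j <;>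
    simp [pauliX, pauliY, pauliZ, Matrix.mul_apply, Fin.sum_univ_two, Matrix.trace, Matrix.vecMul,
      dotProduct] <;> ring_nf <;> simp only [Complex.I_sq] <;> ring

theorem wySkew_smul {ρ : Matrix (Fin 2) (Fin 2) ℂ} (hρ : ρ.PosSemidef)
    (c : ℂ) (X : Matrix (Fin 2) (Fin 2) ℂ) : wySkew hρ (c • X) = c ^ 2 * wySkew hρ X := by
  simp only [wySkew, smul_pow, smul_mul_assoc, mul_smul_comm, trace_smul, smul_smul, smul_eq_mul]
  ring

theorem wySkew_of_mul_self_eq_one {ρ : Matrix (Fin 2) (Fin 2) ℂ} (hρ : ρ.PosSemidef)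
    {P : Matrix (Fin 2) (Fin 2) ℂ} (hP : P * P = 1) :
    wySkew hρ P = ρ.trace - (hρ.sqrt * P * hρ.sqrt * P).trace := by
  rw [wySkew, sq, hP, Matrix.one_mul]

theorem wySkew_pauli_sum {ρ : Matrix (Fin 2) (Fin 2) ℂ} (hρ : ρ.PosSemidef) :
    wySkew hρ pauliX + wySkew hρ pauliY + wySkew hρ pauliZ =
      4 * ρ.trace - 2 * hρ.sqrt.trace ^ 2 := by
  set s := hρ.sqrt
  have hconj : ∀ P : Matrix (Fin 2) (Fin 2) ℂ, (s * P * s * P).trace = (s * (P * s * P)).trace :=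
    fun P => by simp only [Matrix.mul_assoc]
  have htwirl : (s * pauliX * s * pauliX).trace + (s * pauliY * s * pauliY).trace +
      (s * pauliZ * s * pauliZ).trace = 2 * s.trace ^ 2 - ρ.trace := by
    rw [hconj, hconj, hconj, ← trace_add, ← trace_add, ← Matrix.mul_add, ← Matrix.mul_add,
      pauli_conj_sum, Matrix.mul_sub, trace_sub, mul_smul_comm, Matrix.mul_one, trace_smul,
      hρ.sqrt_mul_self, smul_eq_mul]
    ring
  rw [wySkew_of_mul_self_eq_one hρ pauliX_mul_self, wySkew_of_mul_self_eq_one hρ pauliY_mul_self,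
    wySkew_of_mul_self_eq_one hρ pauliZ_mul_self]
  linear_combination -htwirl

theorem stmt9 (ρ : Matrix (Fin 2) (Fin 2) ℂ)
    (hρ : ρ.PosSemidef) (htr : ρ.trace = 1) :
    (1 : ℂ) - (1 / 2 : ℂ) * (hρ.sqrt.trace) ^ 2 ≤
      wySkew hρ ((1 / 2 : ℂ) • pauliX) + wySkew hρ ((1 / 2 : ℂ) • pauliY) +
        wySkew hρ ((1 / 2 : ℂ) • pauliZ) := by
  apply le_of_eq
  have hsum := wySkew_pauli_sum hρ
  rw [htr] at hsum
  simp only [wySkew_smul]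
  linear_combination (-1 / 4 : ℂ) * hsum
end
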